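/- arXiv:2008.06677 — 2 statements merged into one kernel-verified Lean document; each statement's English description precedes it below -/
import Mathlib

section
/- Let n, m ≥ 1, let ξ ∈ ℝⁿ, let Ω ∈ ℝ^{n×n} be positive definite with decomposition Ω = D_Ω Ω̄ D_Ω, and let W ∈ ℝ^{m×n}. Then for every f ∈ ℝⁿ, Φ_m(W f) · φ_n(f − ξ; Ω) = Φ_m(W ξ; W Ω Wᵀ + I_m) · sun(f), where sun is the unified skew-normal SUN_{n,m}(ξ, Ω, Ω̄ D_Ω Wᵀ, W ξ, W Ω Wᵀ + I_m) density. In particular, the function f ↦ Φ_m(W f) · φ_n(f − ξ; Ω) / Φ_m(W ξ; W Ω Wᵀ + I_m) is exactly the SUN_{n,m}(ξ, Ω, Ω̄ D_Ω Wᵀ, W ξ, W Ω Wᵀ + I_m) density; i.e., a multivariate normal prior N(ξ, Ω) is conjugate to the affine probit likelihood f ↦ Φ_m(W f). -/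
open MeasureTheory Real Matrix


/-!
With `Δ = Ω̄ D_Ω Wᵀ` the parameters of the SUN density collapse: symmetry of `Ω̄` gives
`Δᵀ Ω̄⁻¹ = W D_Ω`, hence `Δᵀ Ω̄⁻¹ Δ = W Ω Wᵀ` and `Δᵀ Ω̄⁻¹ D_Ω⁻¹ = W`. The SUN density is therefore
`φ_n(f - ξ; Ω) Φ_m(W f; I_m) / Φ_m(W ξ; W Ω Wᵀ + I_m)`, and the identity only requires the
normalising constant to be nonzero. It is positive because a nondegenerate Gaussian density is
positive and integrable, the latter by comparison with `∏ᵢ exp(-c xᵢ² / 2)`, where `c > 0` bounds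
the inverse covariance's quadratic form from below on the unit sphere.
-/

/-- Centered multivariate normal density with covariance `S`. -/
noncomputable def gaussPdf {ι : Type*} [Fintype ι] [DecidableEq ι]
    (S : Matrix ι ι ℝ) (x : ι → ℝ) : ℝ :=
  (2 * π) ^ (-(Fintype.card ι : ℝ) / 2) * S.det ^ (-(1 : ℝ) / 2) *
    Real.exp (-(1 / 2) * (x ⬝ᵥ S⁻¹.mulVec x))

/-- Centered multivariate normal CDF with covariance `S`, evaluated at `a`. -/
noncomputable def gaussCdf {ι : Type*} [Fintype ι] [DecidableEq ι]
    (S : Matrix ι ι ℝ) (a : ι → ℝ) : ℝ :=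
  ∫ t in {t : ι → ℝ | ∀ i, t i ≤ a i}, gaussPdf S t

/-- `D_Ω`: diagonal matrix of square roots of the diagonal of `Ω`. -/
noncomputable def matD {ι : Type*} [Fintype ι] [DecidableEq ι]
    (Ω : Matrix ι ι ℝ) : Matrix ι ι ℝ :=
  Matrix.diagonal fun i => Real.sqrt (Ω i i)

/-- `Ω̄`: the correlation matrix of `Ω`, so that `Ω = D_Ω Ω̄ D_Ω`. -/
noncomputable def matCorr {ι : Type*} [Fintype ι] [DecidableEq ι]
    (Ω : Matrix ι ι ℝ) : Matrix ι ι ℝ :=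
  (matD Ω)⁻¹ * Ω * (matD Ω)⁻¹

/-- Unified skew-normal `SUN(ξ, Ω, Δ, γ, Γ)` density. -/
noncomputable def sunPdf {ι κ : Type*} [Fintype ι] [DecidableEq ι] [Fintype κ] [DecidableEq κ]
    (ξ : ι → ℝ) (Ω : Matrix ι ι ℝ) (Δ : Matrix ι κ ℝ) (γ : κ → ℝ) (Γ : Matrix κ κ ℝ)
    (z : ι → ℝ) : ℝ :=
  gaussPdf Ω (z - ξ) *
    gaussCdf (Γ - Δᵀ * (matCorr Ω)⁻¹ * Δ)
      (γ + (Δᵀ * (matCorr Ω)⁻¹ * (matD Ω)⁻¹).mulVec (z - ξ)) /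
  gaussCdf Γ γ

/-- Standard univariate normal CDF `Φ₁`. -/
noncomputable def stdNormalCdf (a : ℝ) : ℝ :=
  ∫ t in Set.Iic a, (2 * π) ^ (-(1 : ℝ) / 2) * Real.exp (-(t ^ 2) / 2)

namespace Matrix.PosDef
variable {ι : Type*} [Fintype ι] {A : Matrix ι ι ℝ}

theorem exists_pos_mul_dotProduct_self_le (hA : A.PosDef) :
    ∃ c > 0, ∀ x : ι → ℝ, c * (x ⬝ᵥ x) ≤ x ⬝ᵥ A *ᵥ x := by
  classical
  rcases isEmpty_or_nonempty ι with _ | ⟨⟨i⟩⟩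
  · exact ⟨1, one_pos, fun x => by simp [dotProduct]⟩
  set S := {x : ι → ℝ | x ⬝ᵥ x = 1}
  have hS_bdd : S ⊆ Metric.closedBall 0 1 := fun x (hx : x ⬝ᵥ x = 1) => by
    refine mem_closedBall_zero_iff.mpr ((pi_norm_le_iff_of_nonneg zero_le_one).mpr fun j => ?_)
    rw [Real.norm_eq_abs, ← sq_le_one_iff_abs_le_one, sq, ← hx]
    exact Finset.single_le_sum (f := fun j => x j * x j) (fun j _ => mul_self_nonneg _)
      (Finset.mem_univ j)
  have hS : IsCompact S := Metric.isCompact_of_isClosed_isBounded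
    (isClosed_eq (by fun_prop) continuous_const) (Metric.isBounded_closedBall.subset hS_bdd)
  obtain ⟨x₀, hx₀, hmin⟩ := hS.exists_isMinOn ⟨Pi.single i 1, by simp [S]⟩
    (f := fun x => x ⬝ᵥ A *ᵥ x) (by fun_prop)
  have hx₀_ne : x₀ ≠ 0 := by rintro rfl; simp [S] at hx₀
  refine ⟨_, hA.dotProduct_mulVec_pos hx₀_ne, fun x => ?_⟩
  rcases eq_or_ne x 0 with rfl | hx
  · simp
  -- normalise `x` onto `S`, where the minimum `x₀` is attained
  have hs : 0 < x ⬝ᵥ x := lt_of_le_of_ne (Finset.sum_nonneg fun j _ => mul_self_nonneg _)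
    (Ne.symm (dotProduct_self_eq_zero.not.mpr hx))
  have hr : √(x ⬝ᵥ x) ^ 2 = x ⬝ᵥ x := Real.sq_sqrt hs.le
  have hy : (√(x ⬝ᵥ x))⁻¹ • x ∈ S := by
    change _ = _
    simp only [smul_dotProduct, dotProduct_smul, smul_eq_mul]
    field_simp
    exact hr.symm
  have hle : x₀ ⬝ᵥ A *ᵥ x₀ ≤ (√(x ⬝ᵥ x))⁻¹ ^ 2 * (x ⬝ᵥ A *ᵥ x) := by
    simpa [mulVec_smul, smul_dotProduct, dotProduct_smul, ← mul_assoc, sq] using hmin hy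
  rw [← hr]
  rwa [inv_pow, le_inv_mul_iff₀ (by positivity), mul_comm] at hle

end Matrix.PosDef

section Gaussian
variable {ι : Type*} [Fintype ι] [DecidableEq ι] {S : Matrix ι ι ℝ}

theorem gaussPdf_pos (hS : S.PosDef) (x : ι → ℝ) : 0 < gaussPdf S x := by
  have hdet := hS.det_pos
  unfold gaussPdf
  positivity

theorem continuous_gaussPdf (S : Matrix ι ι ℝ) : Continuous (gaussPdf S) := by
  unfold gaussPdf
  fun_prop

theorem integrable_gaussPdf (hS : S.PosDef) : Integrable (gaussPdf S) := by
  obtain ⟨c, hc, hq⟩ := hS.inv.exists_pos_mul_dotProduct_self_le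
  have hdom : Integrable fun x : ι → ℝ => ∏ i, exp (-(c / 2) * x i ^ 2) :=
    Integrable.fintype_prod fun _ => integrable_exp_neg_mul_sq (by positivity)
  refine (hdom.const_mul ((2 * π) ^ (-(Fintype.card ι : ℝ) / 2) * S.det ^ (-(1 : ℝ) / 2))).mono'
    (continuous_gaussPdf S).aestronglyMeasurable (Filter.Eventually.of_forall fun x => ?_)
  have hdet := hS.det_pos
  rw [Real.norm_of_nonneg (gaussPdf_pos hS x).le, gaussPdf, ← Real.exp_sum]
  gcongr
  have hqx := hq x
  simp only [dotProduct, ← Finset.mul_sum, sq] at hqx ⊢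
  linarith

theorem gaussCdf_pos (hS : S.PosDef) (a : ι → ℝ) : 0 < gaussCdf S a := by
  have hsupp : Function.support (gaussPdf S) = Set.univ :=
    Set.eq_univ_of_forall fun x => (gaussPdf_pos hS x).ne'
  have hbox : {t : ι → ℝ | ∀ i, t i ≤ a i} = Set.univ.pi fun i => Set.Iic (a i) := by
    ext t; simp [Pi.le_def]
  rw [gaussCdf, setIntegral_pos_iff_support_of_nonneg_ae
    (Filter.Eventually.of_forall fun x => (gaussPdf_pos hS x).le)
    (integrable_gaussPdf hS).integrableOn,
    hsupp, Set.univ_inter, hbox, volume_pi_pi]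
  simp [pos_iff_ne_zero]

end Gaussian

section Correlation
variable {ι : Type*} [Fintype ι] [DecidableEq ι] {Ω : Matrix ι ι ℝ}

theorem isUnit_det_matD (hΩ : ∀ i, 0 < Ω i i) : IsUnit (matD Ω).det := by
  rw [matD, det_diagonal]
  exact (Finset.prod_pos fun i _ => Real.sqrt_pos.mpr (hΩ i)).ne'.isUnit

theorem matD_mul_matCorr_mul_matD (hΩ : ∀ i, 0 < Ω i i) : matD Ω * matCorr Ω * matD Ω = Ω := by
  have hD := isUnit_det_matD hΩ
  simp only [matCorr, Matrix.mul_assoc, nonsing_inv_mul _ hD, mul_one,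
    mul_nonsing_inv_cancel_left _ _ hD]

theorem transpose_matD : (matD Ω)ᵀ = matD Ω := diagonal_transpose _

theorem transpose_matCorr (hΩ : Ω.IsSymm) : (matCorr Ω)ᵀ = matCorr Ω := by
  simp only [matCorr, transpose_mul, transpose_nonsing_inv, transpose_matD, hΩ.eq, Matrix.mul_assoc]

theorem isUnit_det_matCorr (hΩ : IsUnit Ω.det) (hΩd : ∀ i, 0 < Ω i i) :
    IsUnit (matCorr Ω).det := by
  have hD := isUnit_nonsing_inv_det _ (isUnit_det_matD hΩd)
  rw [matCorr, det_mul, det_mul]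
  exact (hD.mul hΩ).mul hD

variable {κ : Type*}

theorem transpose_mul_inv_matCorr (hΩ : Ω.PosDef) (W : Matrix κ ι ℝ) :
    (matCorr Ω * matD Ω * Wᵀ)ᵀ * (matCorr Ω)⁻¹ = W * matD Ω := by
  have hsymm : Ω.IsSymm := isHermitian_iff_isSymm.mp hΩ.isHermitian
  have hC := isUnit_det_matCorr hΩ.det_pos.ne'.isUnit fun i => hΩ.diag_pos
  rw [transpose_mul, transpose_mul, transpose_transpose, transpose_matD, transpose_matCorr hsymm,
    Matrix.mul_assoc, Matrix.mul_assoc, mul_nonsing_inv _ hC, mul_one]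

theorem sunPdf_matCorr_mul_matD_mul_transpose [Fintype κ] [DecidableEq κ] (hΩ : Ω.PosDef)
    (ξ : ι → ℝ) (W : Matrix κ ι ℝ) (γ : κ → ℝ) (Γ : Matrix κ κ ℝ) (z : ι → ℝ) :
    sunPdf ξ Ω (matCorr Ω * matD Ω * Wᵀ) γ Γ z =
      gaussPdf Ω (z - ξ) * gaussCdf (Γ - W * Ω * Wᵀ) (γ + W *ᵥ (z - ξ)) / gaussCdf Γ γ := by
  have hΩd : ∀ i, 0 < Ω i i := fun i => hΩ.diag_pos
  have hquad : (matCorr Ω * matD Ω * Wᵀ)ᵀ * (matCorr Ω)⁻¹ * (matCorr Ω * matD Ω * Wᵀ) =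
      W * Ω * Wᵀ := by
    rw [transpose_mul_inv_matCorr hΩ]
    conv_rhs => rw [← matD_mul_matCorr_mul_matD hΩd]
    simp only [Matrix.mul_assoc]
  have hlin : (matCorr Ω * matD Ω * Wᵀ)ᵀ * (matCorr Ω)⁻¹ * (matD Ω)⁻¹ = W := by
    rw [transpose_mul_inv_matCorr hΩ, mul_nonsing_inv_cancel_right _ _ (isUnit_det_matD hΩd)]
  rw [sunPdf, hquad, hlin]

end Correlation

theorem affine_probit_conjugacy_general (n m : ℕ)
    (ξ : Fin n → ℝ) (Ω : Matrix (Fin n) (Fin n) ℝ) (hΩ : Ω.PosDef)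
    (W : Matrix (Fin m) (Fin n) ℝ) :
    ∀ f : Fin n → ℝ,
      gaussCdf (1 : Matrix (Fin m) (Fin m) ℝ) (W.mulVec f) * gaussPdf Ω (f - ξ) =
        gaussCdf (W * Ω * Wᵀ + 1) (W.mulVec ξ) *
          sunPdf ξ Ω (matCorr Ω * matD Ω * Wᵀ) (W.mulVec ξ) (W * Ω * Wᵀ + 1) f := by
  intro f
  have hΓ : (W * Ω * Wᵀ + 1).PosDef := by
    refine PosDef.posSemidef_add ?_ PosDef.one
    simpa only [conjTranspose_eq_transpose_of_trivial] using
      hΩ.posSemidef.mul_mul_conjTranspose_same W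
  rw [sunPdf_matCorr_mul_matD_mul_transpose hΩ, add_sub_cancel_left, mulVec_sub, add_sub_cancel,
    mul_div_assoc', mul_div_cancel_left₀ _ (gaussCdf_pos hΓ _).ne', mul_comm]

/-- a multivariate normal prior `N(ξ, Ω)` is conjugate to the affine probit
likelihood `f ↦ Φ_m(W f)`: the product of likelihood and prior density equals the
normalizing constant `Φ_m(W ξ; W Ω Wᵀ + I_m)` times the
`SUN_{n,m}(ξ, Ω, Ω̄ D_Ω Wᵀ, W ξ, W Ω Wᵀ + I_m)` density. -/
theorem affine_probit_conjugacy (n m : ℕ) (hn : 1 ≤ n) (hm : 1 ≤ m)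
    (ξ : Fin n → ℝ) (Ω : Matrix (Fin n) (Fin n) ℝ) (hΩ : Ω.PosDef)
    (W : Matrix (Fin m) (Fin n) ℝ) :
    ∀ f : Fin n → ℝ,
      gaussCdf (1 : Matrix (Fin m) (Fin m) ℝ) (W.mulVec f) * gaussPdf Ω (f - ξ) =
        gaussCdf (W * Ω * Wᵀ + 1) (W.mulVec ξ) *
          sunPdf ξ Ω (matCorr Ω * matD Ω * Wᵀ) (W.mulVec ξ) (W * Ω * Wᵀ + 1) f :=
  affine_probit_conjugacy_general n m ξ Ω hΩ W
end

section
/- Univariate case of the probit–Gaussian marginalization identity used for the marginal likelihood: for every w, ξ ∈ ℝ and every σ² > 0, ∫_{ℝ} Φ₁(w f) · (2πσ²)^{-1/2} exp(-(f − ξ)²/(2σ²)) df = Φ₁(w ξ / √(w² σ² + 1)). -/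
open MeasureTheory Real Matrix

/-!
If `Z` is standard normal and independent of `F ~ N(ξ, σ²)`, then `Φ₁(w f) = P(Z ≤ w f)`, so the
integral is `P(Z - w F ≤ 0)`. The law of `Z - w F` is the convolution `N(0, 1) ∗ N(-w ξ, w² σ²)
= N(-w ξ, 1 + w² σ²)`, and standardizing gives `Φ₁(w ξ / √(w² σ² + 1))`.
-/

open ProbabilityTheory Set
open scoped NNReal

namespace MeasureTheory.Measure

variable {G : Type*} [AddMonoid G] [MeasurableSpace G] [MeasurableAdd₂ G]

theorem conv_measureReal_apply (μ ν : Measure G) [IsFiniteMeasure μ] [IsFiniteMeasure ν]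
    {s : Set G} (hs : MeasurableSet s) : (μ ∗ ν).real s = ∫ y, μ.real ((· + y) ⁻¹' s) ∂ν := by
  have hs' : MeasurableSet ((fun p : G × G ↦ p.1 + p.2) ⁻¹' s) := measurable_add hs
  rw [measureReal_def, conv, map_apply measurable_add hs, prod_apply_symm hs',
    ← integral_toReal (measurable_measure_prodMk_right hs').aemeasurable
      (ae_of_all _ fun _ ↦ measure_lt_top _ _)]
  rfl

end MeasureTheory.Measure

theorem integral_measureReal_Iic_mul_eq_conv (μ ν : Measure ℝ) [IsFiniteMeasure μ]
    [IsFiniteMeasure ν] (c : ℝ) :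
    ∫ x, μ.real (Iic (c * x)) ∂ν = (μ ∗ ν.map (-c * ·)).real (Iic 0) := by
  have hpre (y : ℝ) : (· + y) ⁻¹' Iic 0 = Iic (-y) := by ext; simp [le_neg_iff_add_nonpos_right]
  have hanti : Antitone fun y ↦ μ.real (Iic (-y)) := fun _ _ h ↦
    measureReal_mono (Iic_subset_Iic.2 (neg_le_neg h))
  simp_rw [Measure.conv_measureReal_apply _ _ measurableSet_Iic, hpre,
    integral_map (by fun_prop : AEMeasurable (-c * ·) ν) hanti.measurable.aestronglyMeasurable]
  simp

theorem gaussianPDFReal_eq_rpow (m : ℝ) (v : ℝ≥0) (x : ℝ) :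
    gaussianPDFReal m v x = (2 * π * v) ^ (-(1 : ℝ) / 2) * exp (-((x - m) ^ 2 / (2 * v))) := by
  rw [gaussianPDFReal, Real.sqrt_eq_rpow, ← rpow_neg (by positivity), neg_div, neg_div]

theorem stdNormalCdf_eq_measureReal (a : ℝ) :
    stdNormalCdf a = (gaussianReal 0 1).real (Iic a) := by
  rw [measureReal_def, gaussianReal_apply_eq_integral _ one_ne_zero,
    ENNReal.toReal_ofReal (integral_nonneg fun _ ↦ gaussianPDFReal_nonneg _ _ _), stdNormalCdf]
  simp [gaussianPDFReal_eq_rpow, neg_div]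

theorem measureReal_gaussianReal_Iic (m : ℝ) {v : ℝ≥0} (hv : v ≠ 0) (a : ℝ) :
    (gaussianReal m v).real (Iic a) = stdNormalCdf ((a - m) / √v) := by
  have hsqrt : 0 < √(v : ℝ) := Real.sqrt_pos.2 (by positivity)
  have hstandardize : (gaussianReal m v).map (fun x ↦ (x - m) / √v) = gaussianReal 0 1 := by
    change Measure.map ((· / √v) ∘ (· - m)) _ = _
    rw [← Measure.map_map (by fun_prop) (by fun_prop), gaussianReal_map_sub_const,
      gaussianReal_map_div_const, sub_self, zero_div]
    congr
    ext
    simp [Real.sq_sqrt, hv]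
  have hpre : (fun x ↦ (x - m) / √v) ⁻¹' Iic ((a - m) / √v) = Iic a := by
    ext x
    simp [div_le_div_iff_of_pos_right hsqrt]
  rw [stdNormalCdf_eq_measureReal, ← hstandardize,
    map_measureReal_apply (by fun_prop) measurableSet_Iic, hpre]

/-- univariate case of the probit–Gaussian marginalization identity:
`∫ Φ₁(w f) (2πσ²)^{-1/2} exp(−(f − ξ)²/(2σ²)) df = Φ₁(w ξ / √(w² σ² + 1))`. -/
theorem probit_gaussian_marginal_univariate (w ξ σ2 : ℝ) (hσ : 0 < σ2) :
    ∫ f : ℝ,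
        stdNormalCdf (w * f) *
          ((2 * π * σ2) ^ (-(1 : ℝ) / 2) * Real.exp (-((f - ξ) ^ 2 / (2 * σ2)))) =
      stdNormalCdf (w * ξ / Real.sqrt (w ^ 2 * σ2 + 1)) := by
  set v := σ2.toNNReal
  have hv : (v : ℝ) = σ2 := Real.coe_toNNReal _ hσ.le
  have hv0 : v ≠ 0 := by simpa [v] using hσ
  calc _ = ∫ f, stdNormalCdf (w * f) ∂gaussianReal ξ v := by
        rw [integral_gaussianReal_eq_integral_smul hv0]
        simp_rw [gaussianPDFReal_eq_rpow, hv, smul_eq_mul, mul_comm]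
    _ = (gaussianReal 0 1 ∗ (gaussianReal ξ v).map (-w * ·)).real (Iic 0) := by
        simp_rw [stdNormalCdf_eq_measureReal]
        exact integral_measureReal_Iic_mul_eq_conv _ _ w
    _ = _ := by
        rw [gaussianReal_map_const_mul, gaussianReal_conv_gaussianReal,
          measureReal_gaussianReal_Iic]
        · push_cast
          rw [hv]
          ring_nf
        · positivity
end
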